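/- arXiv:2401.01471 — 2 statements merged into one kernel-verified Lean document; each statement's English description precedes it below -/
import Mathlib

section
/- Let p(t) = Σ_{k=0}^m a_k t^k ∈ ℝ[t] and let x ∈ ℝⁿ with x > 0 entrywise. Then p(K_x) = Σ_{r=0}^{n−1} [ p_{(r,n)}(α_x^{1/n}) / α_x^{r/n} ] · K_x^r, where p_{(r,n)} is the r mod n-part of p and α_x^{1/n} denotes the positive real n-th root of α_x. -/
/-!
Writing `K_x^k = D_k C^k`, the diagonal `D_k` collects products of the `x_i` along `k` steps of the
cycle; for `k = n` every step of the cycle is taken once and `C^n = 1`, so `K_x^n = α_x • 1`. Hence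
`K_x^k = α_x^(k / n) • K_x^(k mod n)` and `p_{(r,n)}(K_x) = s_r • K_x^r` with
`s_r = Σ_{k ≡ r} a_k α_x^(k / n)`. The positive root `β = α_x^(1/n)` satisfies the same relation
`β^n = α_x`, so `p_{(r,n)}(β) = s_r β^r = s_r α_x^(r/n)`, which recovers the coefficient `s_r`.
-/

open Matrix

/-- The `n`-by-`n` cyclic permutation matrix `C` with `(i,j)`-entry `δ_{π(i),j}`,
where `π(i) = (i mod n) + 1` (realized 0-based by `finRotate n : i ↦ i + 1`). -/
noncomputable def cycMat (n : ℕ) : Matrix (Fin n) (Fin n) ℝ :=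
  (finRotate n).permMatrix ℝ

/-- `K_x := D_x C`. -/
noncomputable def Kmat {n : ℕ} (x : Fin n → ℝ) : Matrix (Fin n) (Fin n) ℝ :=
  Matrix.diagonal x * cycMat n

/-- The `r mod n`-part of `p`: `p_{(r,n)}(t) := Σ_{k ≤ deg p, k mod n = r} a_k t^k`. -/
noncomputable def polyPart (p : Polynomial ℝ) (n r : ℕ) : Polynomial ℝ :=
  ∑ k ∈ Finset.range (p.natDegree + 1),
    if k % n = r then Polynomial.C (p.coeff k) * Polynomial.X ^ k else 0

open Finset Polynomial

namespace Matrix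

variable {ι R : Type*} [Fintype ι] [DecidableEq ι] [CommSemiring R]

lemma permMatrix_mul_diagonal (σ : Equiv.Perm ι) (d : ι → R) :
    σ.permMatrix R * diagonal d = diagonal (d ∘ σ) * σ.permMatrix R := by
  ext i j
  by_cases h : σ i = j
  · subst h
    simp [PEquiv.toMatrix_apply]
  · simp [PEquiv.toMatrix_apply, h]

lemma diagonal_mul_permMatrix_pow (d : ι → R) (σ : Equiv.Perm ι) (k : ℕ) :
    (diagonal d * σ.permMatrix R) ^ k =
      diagonal (fun i => ∏ t ∈ range k, d ((σ ^ t) i)) * (σ ^ k).permMatrix R := by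
  induction k with
  | zero => simp
  | succ k ih =>
    rw [pow_succ, ih, Matrix.mul_assoc, ← Matrix.mul_assoc ((σ ^ k).permMatrix R),
      permMatrix_mul_diagonal, Matrix.mul_assoc, ← permMatrix_mul, ← pow_succ',
      ← Matrix.mul_assoc, diagonal_mul_diagonal]
    congr 2
    ext i
    simp [prod_range_succ]

end Matrix

open Fin.NatCast in
lemma finRotate_pow_apply {m : ℕ} (t : ℕ) (i : Fin (m + 1)) :
    (finRotate (m + 1) ^ t) i = i + (t : Fin (m + 1)) := by
  induction t with
  | zero => simp
  | succ t ih =>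
    rw [pow_succ', Equiv.Perm.mul_apply, ih, finRotate_apply, Nat.cast_succ, add_assoc]

lemma finRotate_pow_self (n : ℕ) : finRotate n ^ n = 1 := by
  cases n with
  | zero => exact Subsingleton.elim _ _
  | succ m => ext i; simp [finRotate_pow_apply]

lemma prod_range_finRotate_pow_apply {M : Type*} [CommMonoid M] {n : ℕ} (x : Fin n → M)
    (i : Fin n) : ∏ t ∈ range n, x ((finRotate n ^ t) i) = ∏ k, x k := by
  cases n with
  | zero => simp
  | succ m =>
    rw [← Fin.prod_univ_eq_prod_range (fun t => x ((finRotate (m + 1) ^ t) i))]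
    simp only [finRotate_pow_apply, Fin.cast_val_eq_self]
    exact Equiv.prod_comp (Equiv.addLeft i) x

lemma Kmat_pow_self {n : ℕ} (x : Fin n → ℝ) :
    Kmat x ^ n = (∏ k, x k) • (1 : Matrix (Fin n) (Fin n) ℝ) := by
  rw [Kmat, cycMat, diagonal_mul_permMatrix_pow, finRotate_pow_self, permMatrix_one, mul_one]
  simp only [prod_range_finRotate_pow_apply, smul_one_eq_diagonal]

lemma pow_eq_smul_pow_mod {R S : Type*} [CommSemiring R] [Semiring S] [Algebra R S] {A : S}
    {c : R} {n : ℕ} (hA : A ^ n = c • 1) (k : ℕ) : A ^ k = c ^ (k / n) • A ^ (k % n) := by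
  conv_lhs => rw [← Nat.div_add_mod k n]
  rw [pow_add, pow_mul, hA, _root_.smul_pow, one_pow, smul_mul_assoc, one_mul]

lemma sum_polyPart (p : ℝ[X]) {n : ℕ} (hn : 0 < n) : ∑ r ∈ range n, polyPart p n r = p := by
  simp only [polyPart]
  rw [sum_comm]
  conv_rhs => rw [p.as_sum_range_C_mul_X_pow]
  refine sum_congr rfl fun k _ => ?_
  rw [sum_ite_eq, if_pos (mem_range.mpr (Nat.mod_lt k hn))]

lemma aeval_polyPart {S : Type*} [Semiring S] [Algebra ℝ S] {A : S} {c : ℝ} {n : ℕ}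
    (hA : A ^ n = c • 1) (p : ℝ[X]) (r : ℕ) :
    aeval A (polyPart p n r) =
      (∑ k ∈ range (p.natDegree + 1) with k % n = r, p.coeff k * c ^ (k / n)) • A ^ r := by
  rw [polyPart, map_sum, sum_smul, sum_filter]
  refine sum_congr rfl fun k _ => ?_
  split_ifs with hk
  · rw [map_mul, aeval_C, aeval_X_pow, pow_eq_smul_pow_mod hA k, hk,
      ← Algebra.smul_def, mul_smul]
  · simp

/-- If `p ∈ ℝ[t]` and `x ∈ ℝⁿ` with `x > 0` entrywise, then
`p(K_x) = Σ_{r=0}^{n-1} [ p_{(r,n)}(α_x^{1/n}) / α_x^{r/n} ] • K_x^r`,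
where `α_x = Π_k x_k` and `α_x^{1/n}` is the positive real `n`-th root. -/
theorem aeval_Kmat (n : ℕ) (p : Polynomial ℝ) (x : Fin n → ℝ) (hx : ∀ i, 0 < x i) :
    Polynomial.aeval (Kmat x) p =
      ∑ r ∈ Finset.range n,
        ((polyPart p n r).eval ((∏ k, x k) ^ ((1 : ℝ) / (n : ℝ))) /
            (∏ k, x k) ^ ((r : ℝ) / (n : ℝ))) • Kmat x ^ r := by
  rcases n.eq_zero_or_pos with rfl | hn
  · exact Subsingleton.elim _ _
  set α := ∏ k, x k
  have hα : 0 < α := prod_pos fun i _ => hx i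
  have hroot_pow (r : ℕ) : (α ^ ((1 : ℝ) / n)) ^ r = α ^ ((r : ℝ) / n) := by
    rw [← Real.rpow_mul_natCast hα.le, one_div_mul_eq_div]
  have hroot : (α ^ ((1 : ℝ) / n)) ^ n = α • (1 : ℝ) := by
    rw [hroot_pow, div_self (Nat.cast_ne_zero.mpr hn.ne'), Real.rpow_one, smul_eq_mul, mul_one]
  conv_lhs => rw [← sum_polyPart p hn]
  rw [map_sum]
  refine sum_congr rfl fun r _ => ?_
  rw [aeval_polyPart (Kmat_pow_self x), ← coe_aeval_eq_eval, aeval_polyPart hroot, smul_eq_mul,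
    hroot_pow, mul_div_cancel_right₀ _ (Real.rpow_pos_of_pos hα _).ne']
end

section
/- Let p ∈ ℝ[t] and let x ∈ ℝⁿ with x > 0 entrywise. If for every r ∈ {0,…,n−1} the r mod n-part p_{(r,n)} of p belongs to 𝒫₁ (i.e., p_{(r,n)}(a) ≥ 0 for every real a ≥ 0), then the matrix p(K_x) is entrywise nonnegative. -/
open Matrix

/-!
`K_x` shifts index `i` to `i + 1` with weight `x i`, so `(K_x ^ k) i j` vanishes unless
`k ≡ j - i (mod n)`, and the weights are periodic: a full turn contributes `P = ∏ x`.
Hence, with `a = P ^ (1/n)` and `r = (j - i) mod n`, `(K_x ^ k) i j = c_{ij} a ^ k` for those `k`,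
with `c_{ij} > 0` independent of `k`, and summing against the coefficients of `p` gives
`p(K_x) i j = c_{ij} p_{(r,n)}(a) ≥ 0`.
-/

open Finset Fin.NatCast Fin.CommRing

theorem Function.Periodic.prod_range_mul_add {M : Type*} [CommMonoid M] {f : ℕ → M} {n : ℕ}
    (hf : Function.Periodic f n) (q r : ℕ) :
    ∏ t ∈ range (q * n + r), f t = (∏ t ∈ range n, f t) ^ q * ∏ t ∈ range r, f t := by
  induction q with
  | zero => simp
  | succ q ih =>
    rw [show (q + 1) * n + r = n + (q * n + r) by ring, prod_range_add]
    have hshift : ∀ t ∈ range (q * n + r), f (n + t) = f t := fun t _ => by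
      rw [add_comm, hf]
    rw [prod_congr rfl hshift, ih, pow_succ', mul_assoc]

section

variable {n : ℕ} [NeZero n]

theorem Fin.prod_range_add_natCast {M : Type*} [CommMonoid M] (f : Fin n → M) (i : Fin n) :
    ∏ t ∈ range n, f (i + t) = ∏ j, f j := by
  rw [← Fin.prod_univ_eq_prod_range (fun t => f (i + t))]
  simp_rw [Fin.cast_val_eq_self]
  exact Fintype.prod_equiv (Equiv.addLeft i) _ _ fun _ => rfl

theorem Fin.add_natCast_eq_iff (i j : Fin n) (k : ℕ) :
    i + (k : Fin n) = j ↔ k % n = (j - i).val := by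
  rw [eq_comm, ← sub_eq_iff_eq_add', Fin.ext_iff, Fin.val_natCast, eq_comm]

variable (x : Fin n → ℝ)

theorem Kmat_apply (i j : Fin n) : Kmat x i j = if i + 1 = j then x i else 0 := by
  simp [Kmat, cycMat, Matrix.diagonal_mul, Equiv.Perm.permMatrix, PEquiv.toMatrix_apply,
    Equiv.toPEquiv_apply, finRotate_apply, mul_ite, eq_comm]

theorem Kmat_pow_apply (k : ℕ) (i j : Fin n) :
    (Kmat x ^ k) i j = if i + k = j then ∏ t ∈ range k, x (i + t) else 0 := by
  induction k generalizing j with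
  | zero => simp [Matrix.one_apply]
  | succ k ih =>
    rw [pow_succ, Matrix.mul_apply, sum_eq_single (i + k)]
    · rw [ih, if_pos rfl, Kmat_apply, prod_range_succ, Nat.cast_succ, ← add_assoc]
      split <;> simp [mul_comm]
    · intro b _ hb
      rw [ih, if_neg (fun h => hb h.symm), zero_mul]
    · simp

theorem Kmat_pow_apply_eq_mul {a : ℝ} (ha : a ≠ 0) (haP : a ^ n = ∏ j, x j) (k : ℕ)
    (i j : Fin n) :
    (Kmat x ^ k) i j = (∏ t ∈ range (j - i).val, x (i + t)) / a ^ (j - i).val *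
      if k % n = (j - i).val then a ^ k else 0 := by
  rw [Kmat_pow_apply, if_congr (Fin.add_natCast_eq_iff i j k) rfl rfl]
  split_ifs with hk
  · have hperiodic : Function.Periodic (fun t : ℕ => x (i + t)) n := fun t => by simp
    obtain ⟨q, rfl⟩ : ∃ q, k = q * n + (j - i).val := ⟨k / n, by rw [← hk, Nat.div_add_mod']⟩
    rw [hperiodic.prod_range_mul_add, Fin.prod_range_add_natCast, pow_add, pow_mul', haP]
    field_simp
  · simp

theorem aeval_Kmat_apply {a : ℝ} (ha : a ≠ 0) (haP : a ^ n = ∏ j, x j) (p : Polynomial ℝ)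
    (i j : Fin n) :
    Polynomial.aeval (Kmat x) p i j =
      (∏ t ∈ range (j - i).val, x (i + t)) / a ^ (j - i).val *
        (polyPart p n (j - i).val).eval a := by
  simp only [Polynomial.aeval_eq_sum_range, Matrix.sum_apply, Matrix.smul_apply,
    Kmat_pow_apply_eq_mul x ha haP, polyPart, Polynomial.eval_finsetSum, mul_sum]
  refine sum_congr rfl fun k _ => ?_
  split_ifs <;> simp [mul_left_comm]

end

/-- Let `p ∈ ℝ[t]` and `x ∈ ℝⁿ` with `x > 0` entrywise. If for every
`r ∈ {0,…,n-1}` the `r mod n`-part `p_{(r,n)}` of `p` belongs to `𝒫₁` (i.e.,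
`p_{(r,n)}(a) ≥ 0` for all real `a ≥ 0`), then `p(K_x)` is entrywise nonnegative. -/
theorem aeval_Kmat_nonneg (n : ℕ) (p : Polynomial ℝ) (x : Fin n → ℝ) (hx : ∀ i, 0 < x i)
    (h : ∀ r < n, ∀ a : ℝ, 0 ≤ a → 0 ≤ (polyPart p n r).eval a) :
    ∀ i j, 0 ≤ Polynomial.aeval (Kmat x) p i j := by
  intro i j
  have : NeZero n := ⟨by rintro rfl; exact i.elim0⟩
  set a := (∏ k, x k) ^ ((n : ℝ)⁻¹)
  have hprod : 0 < ∏ k, x k := prod_pos fun k _ => hx k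
  have ha : 0 < a := Real.rpow_pos_of_pos hprod _
  have haP : a ^ n = ∏ k, x k := Real.rpow_inv_natCast_pow hprod.le (NeZero.ne n)
  rw [aeval_Kmat_apply x ha.ne' haP]
  have hweight : 0 < ∏ t ∈ range (j - i).val, x (i + t) := prod_pos fun t _ => hx _
  exact mul_nonneg (div_nonneg hweight.le (pow_nonneg ha.le _)) (h _ (j - i).isLt a ha.le)
end
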